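/- arXiv:math/0701811 — 3 statements merged into one kernel-verified Lean document; each statement's English description precedes it below -/
import Mathlib

section
/- Let g be an entire function on ℂ whose zero set is exactly the lattice ℤ + iℤ, all zeros simple. Let μ ∈ ℝ^m, μ ≠ 0, and t ∈ ℝ, and set λ = tμ. Then there exists an entire function F on ℂ^m having the same divisor as z ↦ g(⟨z,λ⟩ + i⟨z,μ⟩) (i.e., g(⟨z,λ⟩ + i⟨z,μ⟩) = u(z)·F(z) for some zero-free entire u on ℂ^m) such that |F| is almost periodic on ℂ^m, i.e., the restriction of |F| to every tube T_K = {x+iy : x ∈ ℝ^m, y ∈ K}, K ⊂ ℝ^m compact, is almost periodic. -/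
/-
With `e w = exp (2πiw)` and `q = e i = exp (-2π)`, the triple product
`θ w = (1 - e w) ∏_{n ≥ 1} (1 - qⁿ e w) (1 - qⁿ e (-w))` is entire, `θ (w + 1) = θ w` and
`θ (w + i) = -e (-w) θ w`. These functional equations carry the simple zero of `θ` at `0` to every
point of `ℤ + ℤi`, and the factors of the product vanish nowhere else; so `g = v θ` with `v` entire
and zero-free. They also make `P w = ‖θ w‖ exp (-π (Im w)² + π Im w)` continuous and doubly
periodic, hence uniformly continuous.

Put `α = t + i` and `ζ = ⟨z, μ⟩`, so that `g` is evaluated at `αζ`, and let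
`F = θ (αζ) exp (πiα ζ (ζ - 1))`. Then `‖F z‖ = P (αζ) exp (π (1 + t²) (Im ζ)²)`, where a real
shift of `z` translates `αζ` by a complex number and leaves `Im ζ` unchanged. Reducing the
translations modulo `ℤ + ℤi` into a compact square and extracting a convergent subsequence gives
uniform convergence of the shifts of `‖F‖` on every tube with compact base.
-/

open MeasureTheory Filter Complex

noncomputable section

/-- Embedding of a real vector into `ℂ^m`. -/
def toC {m : ℕ} (t : Fin m → ℝ) : Fin m → ℂ := fun j => (t j : ℂ)

/-- The tube set `T_S = {z = x + iy : x ∈ ℝ^m, y ∈ S}` over a base `S ⊆ ℝ^m`. -/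
def tube {m : ℕ} (S : Set (Fin m → ℝ)) : Set (Fin m → ℂ) :=
  {z : Fin m → ℂ | (fun j => (z j).im) ∈ S}

/-- `f` is almost periodic on a set `T ⊆ ℂ^m` (w.r.t. real shifts): every sequence of
real shifts has a subsequence converging uniformly on `T`. -/
def APOn {m : ℕ} {E : Type*} [NormedAddCommGroup E]
    (f : (Fin m → ℂ) → E) (T : Set (Fin m → ℂ)) : Prop :=
  ∀ h : ℕ → (Fin m → ℝ), ∃ σ : ℕ → ℕ, StrictMono σ ∧ ∃ g : (Fin m → ℂ) → E,
    TendstoUniformlyOn (fun n z => f (z + toC (h (σ n)))) g atTop T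

/-- `f` is almost periodic on the tube domain `T_Ω`: its restriction to every tube `T_K`
with compact base `K ⊆ Ω` is almost periodic. -/
def APTube {m : ℕ} {E : Type*} [NormedAddCommGroup E]
    (f : (Fin m → ℂ) → E) (Ω : Set (Fin m → ℝ)) : Prop :=
  ∀ K : Set (Fin m → ℝ), IsCompact K → K ⊆ Ω → APOn f (tube K)

/-- Almost periodicity of a function on `ℝ^m`: every sequence of shifts has a
uniformly convergent subsequence on all of `ℝ^m`. -/
def APRn {m : ℕ} {E : Type*} [NormedAddCommGroup E]
    (f : (Fin m → ℝ) → E) : Prop :=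
  ∀ h : ℕ → (Fin m → ℝ), ∃ σ : ℕ → ℕ, StrictMono σ ∧ ∃ g : (Fin m → ℝ) → E,
    TendstoUniformly (fun n t => f (t + h (σ n))) g atTop

/-- Real directional derivative along a vector `v ∈ ℂ^m`. -/
def pdv {m : ℕ} (v : Fin m → ℂ) (φ : (Fin m → ℂ) → ℂ) : (Fin m → ℂ) → ℂ :=
  fun z => fderiv ℝ φ z v

/-- `∂/∂x_j` (`x_j = Re z_j`). -/
def pdx {m : ℕ} (j : Fin m) : ((Fin m → ℂ) → ℂ) → (Fin m → ℂ) → ℂ :=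
  pdv (Pi.single j 1)

/-- `∂/∂y_j` (`y_j = Im z_j`). -/
def pdy {m : ℕ} (j : Fin m) : ((Fin m → ℂ) → ℂ) → (Fin m → ℂ) → ℂ :=
  pdv (Pi.single j Complex.I)

/-- Wirtinger derivative `∂/∂z_k = (1/2)(∂/∂x_k - i ∂/∂y_k)`. -/
def dz {m : ℕ} (k : Fin m) (φ : (Fin m → ℂ) → ℂ) : (Fin m → ℂ) → ℂ :=
  fun z => (1 / 2 : ℂ) * (pdx k φ z - Complex.I * pdy k φ z)

/-- Wirtinger derivative `∂/∂z̄_j = (1/2)(∂/∂x_j + i ∂/∂y_j)`. -/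
def dzbar {m : ℕ} (j : Fin m) (φ : (Fin m → ℂ) → ℂ) : (Fin m → ℂ) → ℂ :=
  fun z => (1 / 2 : ℂ) * (pdx j φ z + Complex.I * pdy j φ z)

/-- The bilinear pairing `⟨z, l⟩ = ∑ j, z_j l_j` of `z ∈ ℂ^m` with `l ∈ ℝ^m`. -/
def bil {m : ℕ} (z : Fin m → ℂ) (l : Fin m → ℝ) : ℂ := ∑ j, z j * (l j : ℂ)

open Real Topology

section LatticePeriodic

variable {β : Type*} {P : ℂ → β}

lemma Function.Periodic.add_int_add_int_mul_I (h1 : Function.Periodic P 1)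
    (hI : Function.Periodic P I) (v : ℂ) (p k : ℤ) : P (v + (p + k * I)) = P v := by
  rw [← add_assoc, hI.int_mul k (v + p), ← mul_one (p : ℂ), h1.int_mul p v]

lemma norm_sub_floor_re_add_floor_im_lt_two (a : ℂ) : ‖a - (⌊a.re⌋ + ⌊a.im⌋ * I)‖ < 2 := by
  refine (Complex.norm_le_abs_re_add_abs_im _).trans_lt ?_
  have hre : (a - (⌊a.re⌋ + ⌊a.im⌋ * I)).re = Int.fract a.re := by simp
  have him : (a - (⌊a.re⌋ + ⌊a.im⌋ * I)).im = Int.fract a.im := by simp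
  rw [hre, him, abs_of_nonneg (Int.fract_nonneg _), abs_of_nonneg (Int.fract_nonneg _)]
  linarith [Int.fract_lt_one a.re, Int.fract_lt_one a.im]

variable [PseudoMetricSpace β]

lemma Continuous.uniformContinuous_of_periodic_one_of_periodic_I (hP : Continuous P)
    (h1 : Function.Periodic P 1) (hI : Function.Periodic P I) : UniformContinuous P := by
  rw [Metric.uniformContinuous_iff]
  intro ε hε
  obtain ⟨δ, hδ, hPδ⟩ := Metric.uniformContinuousOn_iff.mp
    ((isCompact_closedBall (0 : ℂ) 3).uniformContinuousOn_of_continuous hP.continuousOn) ε hε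
  refine ⟨min δ 1, by positivity, fun {a b} hab => ?_⟩
  -- translate `a` into the fundamental square; `b` stays close to it
  set c : ℂ := ⌊a.re⌋ + ⌊a.im⌋ * I
  have ha : ‖a - c‖ < 2 := norm_sub_floor_re_add_floor_im_lt_two a
  have hab' : dist (a - c) (b - c) < min δ 1 := by rwa [dist_sub_right]
  have hb : ‖b - c‖ < 3 := by
    have := norm_le_norm_add_norm_sub' (b - c) (a - c)
    rw [← dist_eq_norm (b - c), dist_comm] at this
    linarith [min_le_right δ 1]
  have hPc : ∀ x, P (x - c) = P x := fun x => by
    rw [← h1.add_int_add_int_mul_I hI (x - c), sub_add_cancel]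
  rw [← hPc a, ← hPc b]
  exact hPδ _ (mem_closedBall_zero_iff.mpr (by linarith)) _ (mem_closedBall_zero_iff.mpr hb.le)
    (hab'.trans_le (min_le_left _ _))

lemma Continuous.exists_subseq_tendstoUniformly_comp_add (hP : Continuous P)
    (h1 : Function.Periodic P 1) (hI : Function.Periodic P I) (ξ : ℕ → ℂ) :
    ∃ σ : ℕ → ℕ, StrictMono σ ∧ ∃ ρ : ℂ,
      TendstoUniformly (fun n v => P (v + ξ (σ n))) (fun v => P (v + ρ)) atTop := by
  set ρ : ℕ → ℂ := fun n => ξ n - (⌊(ξ n).re⌋ + ⌊(ξ n).im⌋ * I)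
  obtain ⟨ρ₀, -, σ, hσ, hρ⟩ := (isCompact_closedBall (0 : ℂ) 2).tendsto_subseq (x := ρ)
    fun n => mem_closedBall_zero_iff.mpr (norm_sub_floor_re_add_floor_im_lt_two _).le
  have htrans : TendstoUniformly (fun n v => v + ρ (σ n)) (fun v => v + ρ₀) atTop := by
    rw [Metric.tendstoUniformly_iff]
    intro ε hε
    filter_upwards [Metric.tendsto_nhds.mp hρ ε hε] with n hn v
    rwa [dist_add_left, dist_comm]
  refine ⟨σ, hσ, ρ₀, ?_⟩
  convert (hP.uniformContinuous_of_periodic_one_of_periodic_I h1 hI).comp_tendstoUniformly htrans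
    using 1
  · ext n v
    simp only [Function.comp_apply, ρ, ← add_sub_assoc]
    rw [← h1.add_int_add_int_mul_I hI (v + ξ (σ n) - _), sub_add_cancel]
  · rfl

end LatticePeriodic

lemma TendstoUniformlyOn.mul_of_norm_le {ι α R : Type*} [SeminormedRing R] {F : ι → α → R}
    {G X : α → R} {l : Filter ι} {S : Set α} {C : ℝ} (hF : TendstoUniformlyOn F G l S)
    (hX : ∀ x ∈ S, ‖X x‖ ≤ C) :
    TendstoUniformlyOn (fun i x => F i x * X x) (fun x => G x * X x) l S := by
  rw [Metric.tendstoUniformlyOn_iff] at hF ⊢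
  intro ε hε
  filter_upwards [hF (ε / (|C| + 1)) (by positivity)] with i hi x hx
  rw [dist_eq_norm, ← sub_mul]
  calc ‖(G x - F i x) * X x‖ ≤ ‖G x - F i x‖ * ‖X x‖ := norm_mul_le _ _
    _ ≤ ε / (|C| + 1) * |C| := by
      rw [← dist_eq_norm]
      gcongr
      · exact (hi x hx).le
      · exact (hX x hx).trans (le_abs_self C)
    _ < ε := by
      rw [div_mul_eq_mul_div, div_lt_iff₀ (by positivity)]
      nlinarith [abs_nonneg C]

lemma Differentiable.differentiableAt_dslope {f : ℂ → ℂ} (hf : Differentiable ℂ f) (a w : ℂ) :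
    DifferentiableAt ℂ (dslope f a) w :=
  ((Complex.differentiableOn_dslope Filter.univ_mem).mpr hf.differentiableOn).differentiableAt
    Filter.univ_mem

lemma div_eq_dslope_div_dslope {f h : ℂ → ℂ} {a w : ℂ} (hfa : f a = 0) (hha : h a = 0)
    (hw : w ≠ a) : f w / h w = dslope f a w / dslope h a w := by
  rw [dslope_of_ne _ hw, dslope_of_ne _ hw, slope_def_field, slope_def_field, hfa, hha, sub_zero,
    sub_zero, div_div_div_cancel_right₀ (sub_ne_zero.mpr hw)]

lemma exists_eq_mul_of_simple_zeros {f h : ℂ → ℂ} (hf : Differentiable ℂ f)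
    (hh : Differentiable ℂ h) (hfh : ∀ w, f w = 0 ↔ h w = 0) (hf' : ∀ w, f w = 0 → deriv f w ≠ 0)
    (hh' : ∀ w, h w = 0 → deriv h w ≠ 0) :
    ∃ v : ℂ → ℂ, Differentiable ℂ v ∧ (∀ w, v w ≠ 0) ∧ ∀ w, f w = v w * h w := by
  classical
  let v : ℂ → ℂ := fun w => if h w = 0 then deriv f w / deriv h w else f w / h w
  refine ⟨v, fun a => ?_, fun w => ?_, fun w => ?_⟩
  · by_cases ha : h a = 0
    · have hda : dslope h a a ≠ 0 := by rw [dslope_same]; exact hh' a ha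
      have hv : v =ᶠ[𝓝 a] fun w => dslope f a w / dslope h a w := by
        filter_upwards [(hh.differentiableAt_dslope a a).continuousAt.eventually_ne hda] with w hw
        rcases eq_or_ne w a with rfl | hwa
        · simp [v, ha, dslope_same]
        · have hhw : h w ≠ 0 := by
            have := smul_ne_zero (sub_ne_zero.mpr hwa) hw
            rwa [sub_smul_dslope, ha, sub_zero] at this
          simp only [v, hhw, if_false]
          exact div_eq_dslope_div_dslope ((hfh a).mpr ha) ha hwa
      exact (((hf.differentiableAt_dslope a a).div (hh.differentiableAt_dslope a a)
        hda).congr_of_eventuallyEq hv)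
    · have hv : v =ᶠ[𝓝 a] fun w => f w / h w := by
        filter_upwards [(hh a).continuousAt.eventually_ne ha] with w hw
        simp [v, hw]
      exact ((hf a).div (hh a) ha).congr_of_eventuallyEq hv
  · by_cases hw : h w = 0
    · simpa [v, hw] using ⟨hf' w ((hfh w).mpr hw), hh' w hw⟩
    · simpa [v, hw] using mt (hfh w).mp hw
  · by_cases hw : h w = 0
    · simp [v, hw, (hfh w).mpr hw]
    · simp [v, hw]

lemma zero_and_deriv_ne_zero_add_iff_of_eq_mul {f u : ℂ → ℂ} {a c : ℂ} (hf : Differentiable ℂ f)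
    (hu : DifferentiableAt ℂ u a) (hua : u a ≠ 0) (hfu : ∀ w, f (w + c) = u w * f w) :
    (f (a + c) = 0 ∧ deriv f (a + c) ≠ 0) ↔ (f a = 0 ∧ deriv f a ≠ 0) := by
  have hderiv : deriv f (a + c) = u a * deriv f a + deriv u a * f a := by
    rw [← deriv_comp_add_const, funext hfu, deriv_fun_mul hu (hf a)]
    ring
  rw [hfu, hderiv, mul_eq_zero, or_iff_right hua]
  constructor <;> rintro ⟨h0, hd⟩ <;> simp_all

/-- The `q`-Pochhammer symbol `(q x; q)_∞`. -/
def qPochhammer (q x : ℂ) : ℂ := ∏' n : ℕ, (1 - q ^ (n + 1) * x)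

section qPochhammer

variable {q : ℂ}

lemma summable_norm_pow_succ_mul (hq : ‖q‖ < 1) (x : ℂ) :
    Summable fun n : ℕ => ‖q ^ (n + 1) * x‖ := by
  simp_rw [norm_mul, norm_pow]
  exact ((summable_nat_add_iff 1).mpr
    (summable_geometric_of_lt_one (norm_nonneg _) hq)).mul_right _

lemma multipliable_one_sub_pow_succ_mul (hq : ‖q‖ < 1) (x : ℂ) :
    Multipliable fun n : ℕ => 1 - q ^ (n + 1) * x := by
  simpa [sub_eq_add_neg] using
    multipliable_one_add_of_summable (f := fun n : ℕ => -(q ^ (n + 1) * x))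
      (by simpa using summable_norm_pow_succ_mul hq x)

lemma qPochhammer_ne_zero (hq : ‖q‖ < 1) {x : ℂ} (hx : ∀ n : ℕ, q ^ (n + 1) * x ≠ 1) :
    qPochhammer q x ≠ 0 := by
  have := tprod_one_add_ne_zero_of_summable (f := fun n : ℕ => -(q ^ (n + 1) * x))
    (fun n h => hx n (by linear_combination -h)) (by simpa using summable_norm_pow_succ_mul hq x)
  simpa [qPochhammer, sub_eq_add_neg] using this

lemma qPochhammer_eq_mul (hq : ‖q‖ < 1) (x : ℂ) :
    qPochhammer q x = (1 - q * x) * qPochhammer q (q * x) := by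
  have hshift : (fun n : ℕ => 1 - q ^ (n + 1 + 1) * x) = fun n => 1 - q ^ (n + 1) * (q * x) := by
    ext n; ring
  unfold qPochhammer
  rw [tprod_eq_zero_mul' (hshift ▸ multipliable_one_sub_pow_succ_mul hq (q * x)), hshift,
    zero_add, pow_one]

lemma differentiableOn_qPochhammer (hq : ‖q‖ < 1) (R : ℝ) :
    DifferentiableOn ℂ (qPochhammer q) (Metric.ball 0 R) := by
  have hprod : HasProdLocallyUniformlyOn (fun n x => 1 + -(q ^ (n + 1) * x))
      (fun x => ∏' n, (1 + -(q ^ (n + 1) * x))) (Metric.ball 0 R) :=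
    Summable.hasProdLocallyUniformlyOn_nat_one_add Metric.isOpen_ball
      (summable_norm_pow_succ_mul hq R) (.of_forall fun n x hx => by
        rw [norm_neg, norm_mul, norm_mul, Complex.norm_real, Real.norm_eq_abs]
        gcongr
        exact (mem_ball_zero_iff.mp hx).le.trans (le_abs_self R))
      (fun n => by fun_prop)
  simp_rw [← sub_eq_add_neg] at hprod
  exact hprod.differentiableOn (.of_forall fun s => by
    simpa [Finset.prod_fn] using DifferentiableOn.finsetProd (fun _ _ => by fun_prop))
    Metric.isOpen_ball

lemma differentiable_qPochhammer (hq : ‖q‖ < 1) : Differentiable ℂ (qPochhammer q) := fun x =>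
  (differentiableOn_qPochhammer hq (‖x‖ + 1)).differentiableAt
    (Metric.isOpen_ball.mem_nhds (by simp))

end qPochhammer

namespace LatticeTheta

def e (w : ℂ) : ℂ := cexp (2 * π * I * w)

lemma e_add (w w' : ℂ) : e (w + w') = e w * e w' := by
  rw [e, e, e, ← Complex.exp_add]; ring_nf

lemma e_mul_e_neg (w : ℂ) : e w * e (-w) = 1 := by
  rw [← e_add, add_neg_cancel, e, mul_zero, Complex.exp_zero]

lemma e_eq_one_iff {w : ℂ} : e w = 1 ↔ ∃ k : ℤ, w = k := by
  have h2πI : 2 * π * I ≠ 0 := by simp [Real.pi_ne_zero, I_ne_zero]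
  rw [e, Complex.exp_eq_one_iff]
  refine exists_congr fun k => ?_
  rw [mul_comm (k : ℂ), mul_right_inj' h2πI]

lemma e_add_one (w : ℂ) : e (w + 1) = e w := by
  have h1 : e 1 = 1 := e_eq_one_iff.mpr ⟨1, by simp⟩
  rw [e_add, h1, mul_one]

lemma norm_e (w : ℂ) : ‖e w‖ = rexp (-(2 * π) * w.im) := by
  rw [e, Complex.norm_exp]
  congr 1
  simp [Complex.mul_re]

lemma norm_e_I_lt_one : ‖e I‖ < 1 := by
  rw [norm_e, I_im, mul_one, Real.exp_lt_one_iff]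
  linarith [Real.pi_pos]

lemma e_I_pow_mul (n : ℕ) (w : ℂ) : e I ^ n * e w = e (w + n * I) := by
  rw [e, e, e, ← Complex.exp_nat_mul, ← Complex.exp_add]
  ring_nf

lemma hasDerivAt_e (w : ℂ) : HasDerivAt e (2 * π * I * e w) w := by
  have h := ((hasDerivAt_id w).const_mul (2 * (π : ℂ) * I)).cexp
  simp only [id, mul_one] at h
  rw [mul_comm]
  exact h

@[fun_prop]
lemma differentiable_e : Differentiable ℂ e := fun w => (hasDerivAt_e w).differentiableAt

/-- Jacobi's triple product with nome `e I = exp (-2π)`. -/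
def theta (w : ℂ) : ℂ :=
  (1 - e w) * qPochhammer (e I) (e w) * qPochhammer (e I) (e (-w))

@[fun_prop]
lemma differentiable_theta : Differentiable ℂ theta := by
  have hP := differentiable_qPochhammer norm_e_I_lt_one
  unfold theta
  fun_prop

lemma theta_add_one (w : ℂ) : theta (w + 1) = theta w := by
  have h : e (-(w + 1)) = e (-w) := by
    rw [← e_add_one]
    ring_nf
  rw [theta, theta, e_add_one, h]

lemma theta_add_I (w : ℂ) : theta (w + I) = -e (-w) * theta w := by
  have hq := norm_e_I_lt_one
  have h₁ : qPochhammer (e I) (e w) = (1 - e (w + I)) * qPochhammer (e I) (e (w + I)) := by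
    rw [qPochhammer_eq_mul hq, e_add, mul_comm (e w)]
  have h₂ : qPochhammer (e I) (e (-(w + I))) = (1 - e (-w)) * qPochhammer (e I) (e (-w)) := by
    rw [qPochhammer_eq_mul hq, ← e_add, show I + -(w + I) = -w by ring]
  have h₃ : 1 - e (-w) = -e (-w) * (1 - e w) := by
    linear_combination -e_mul_e_neg w
  rw [theta, theta, h₁, h₂, h₃]
  ring

lemma theta_zero_and_deriv_ne_zero : theta 0 = 0 ∧ deriv theta 0 ≠ 0 := by
  have he0 : e 0 = 1 := by simp [e]
  have hP1 : qPochhammer (e I) 1 ≠ 0 := qPochhammer_ne_zero norm_e_I_lt_one fun n h => by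
    have hn := congrArg norm h
    rw [mul_one, norm_pow, norm_one] at hn
    exact (pow_lt_one₀ (norm_nonneg _) norm_e_I_lt_one n.succ_ne_zero).ne hn
  have hP := differentiable_qPochhammer norm_e_I_lt_one
  have htheta : theta = fun w =>
      (1 - e w) * (qPochhammer (e I) (e w) * qPochhammer (e I) (e (-w))) := by
    ext w
    rw [theta, mul_assoc]
  refine ⟨by simp [theta, he0], ?_⟩
  rw [htheta, deriv_fun_mul (by fun_prop) (by fun_prop), deriv_const_sub, (hasDerivAt_e 0).deriv]
  simp [he0, hP1, Real.pi_ne_zero, I_ne_zero]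

lemma theta_zero_and_deriv_ne_zero_at_lattice (p k : ℤ) :
    theta (p + k * I) = 0 ∧ deriv theta (p + k * I) ≠ 0 := by
  let S : ℂ → Prop := fun a => theta a = 0 ∧ deriv theta a ≠ 0
  have hS1 : Function.Periodic S 1 := fun a => propext <|
    zero_and_deriv_ne_zero_add_iff_of_eq_mul (u := 1) differentiable_theta
      (differentiableAt_const _) one_ne_zero (by simp [theta_add_one])
  have hSI : Function.Periodic S I := fun a => propext <|
    zero_and_deriv_ne_zero_add_iff_of_eq_mul differentiable_theta (by fun_prop) (by simp [e])
      theta_add_I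
  have hS := hS1.add_int_add_int_mul_I hSI 0 p k
  rw [zero_add] at hS
  show S _
  rw [hS]
  exact theta_zero_and_deriv_ne_zero

lemma exists_of_qPochhammer_e_eq_zero {w : ℂ} (hw : qPochhammer (e I) (e w) = 0) :
    ∃ n : ℕ, ∃ k : ℤ, w + (n + 1) * I = k := by
  by_contra! hne
  refine qPochhammer_ne_zero norm_e_I_lt_one (fun n hn => ?_) hw
  obtain ⟨k, hk⟩ := e_eq_one_iff.mp (e_I_pow_mul (n + 1) w ▸ hn)
  exact hne n k (by exact_mod_cast hk)

lemma theta_eq_zero_iff {w : ℂ} : theta w = 0 ↔ ∃ p k : ℤ, w = p + k * I := by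
  refine ⟨fun hw => ?_, fun ⟨p, k, hw⟩ => hw ▸ (theta_zero_and_deriv_ne_zero_at_lattice p k).1⟩
  rcases mul_eq_zero.mp hw with hw | hw
  · rcases mul_eq_zero.mp hw with hw | hw
    · obtain ⟨p, rfl⟩ := e_eq_one_iff.mp (sub_eq_zero.mp hw).symm
      exact ⟨p, 0, by simp⟩
    · obtain ⟨n, k, hk⟩ := exists_of_qPochhammer_e_eq_zero hw
      exact ⟨k, -(n + 1), by push_cast; linear_combination hk⟩
  · obtain ⟨n, k, hk⟩ := exists_of_qPochhammer_e_eq_zero hw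
    exact ⟨-k, n + 1, by push_cast; linear_combination -hk⟩

/-- The Gaussian weight compensates the multiplier `-e (-w)` of `theta (w + I)`, of modulus
`exp (2π Im w)`. -/
def thetaModulus (w : ℂ) : ℝ := ‖theta w‖ * rexp (-π * w.im ^ 2 + π * w.im)

lemma continuous_thetaModulus : Continuous thetaModulus := by
  have := differentiable_theta.continuous
  unfold thetaModulus
  fun_prop

lemma periodic_thetaModulus_one : Function.Periodic thetaModulus 1 := fun w => by
  simp [thetaModulus, theta_add_one]

lemma periodic_thetaModulus_I : Function.Periodic thetaModulus I := fun w => by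
  rw [thetaModulus, thetaModulus, theta_add_I, norm_mul, norm_neg, norm_e, mul_comm (rexp _),
    mul_assoc, ← Real.exp_add, add_im, I_im, neg_im]
  ring_nf

lemma norm_theta_mul_cexp (t : ℝ) (ζ : ℂ) :
    ‖theta ((t + I) * ζ) * cexp (π * I * (t + I) * ζ * (ζ - 1))‖ =
      thetaModulus ((t + I) * ζ) * rexp (π * (1 + t ^ 2) * ζ.im ^ 2) := by
  rw [norm_mul, Complex.norm_exp, thetaModulus, mul_assoc ‖theta _‖, ← Real.exp_add]
  congr 2
  simp only [mul_re, mul_im, add_re, add_im, sub_re, sub_im, ofReal_re, ofReal_im, I_re, I_im,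
    one_re, one_im]
  ring

end LatticeTheta

section Pairing

variable {m : ℕ}

@[fun_prop]
lemma differentiable_bil (μ : Fin m → ℝ) : Differentiable ℂ fun z => bil z μ := by
  unfold bil
  fun_prop

lemma bil_smul (z : Fin m → ℂ) (t : ℝ) (μ : Fin m → ℝ) : bil z (t • μ) = t * bil z μ := by
  simp only [bil, Finset.mul_sum, Pi.smul_apply, smul_eq_mul, ofReal_mul]
  exact Finset.sum_congr rfl fun j _ => by ring

lemma bil_add_toC (z : Fin m → ℂ) (s μ : Fin m → ℝ) :
    bil (z + toC s) μ = bil z μ + ((∑ j, s j * μ j : ℝ) : ℂ) := by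
  simp only [bil, toC, Pi.add_apply, add_mul, Finset.sum_add_distrib, ofReal_sum, ofReal_mul]

lemma im_bil (z : Fin m → ℂ) (μ : Fin m → ℝ) : (bil z μ).im = ∑ j, (z j).im * μ j := by
  simp [bil, im_sum]

lemma exists_norm_comp_im_bil_le_on_tube {K : Set (Fin m → ℝ)} (hK : IsCompact K) {φ : ℝ → ℝ}
    (hφ : Continuous φ) (μ : Fin m → ℝ) : ∃ C, ∀ z ∈ tube K, ‖φ (bil z μ).im‖ ≤ C := by
  obtain ⟨C, hC⟩ := hK.exists_bound_of_continuousOn (f := fun y => φ (∑ j, y j * μ j))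
    (by fun_prop)
  exact ⟨C, fun z hz => by simpa [im_bil] using hC _ hz⟩

end Pairing

lemma apOn_of_eq_mul {m : ℕ} {f : (Fin m → ℂ) → ℝ} {P : ℂ → ℝ} (hP : Continuous P)
    (h1 : Function.Periodic P 1) (hI : Function.Periodic P I) {L : (Fin m → ℂ) → ℂ}
    {ξ : (Fin m → ℝ) → ℂ} (hL : ∀ z s, L (z + toC s) = L z + ξ s) {X : (Fin m → ℂ) → ℝ}
    (hX : ∀ z s, X (z + toC s) = X z) {T : Set (Fin m → ℂ)} {C : ℝ} (hXT : ∀ z ∈ T, ‖X z‖ ≤ C)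
    (hf : ∀ z, f z = P (L z) * X z) : APOn f T := by
  intro h
  obtain ⟨σ, hσ, ρ, hconv⟩ := hP.exists_subseq_tendstoUniformly_comp_add h1 hI (ξ ∘ h)
  refine ⟨σ, hσ, fun z => P (L z + ρ) * X z, ?_⟩
  convert ((hconv.comp L).tendstoUniformlyOn (s := T)).mul_of_norm_le hXT using 2 with n z
  · simp [hf, hL, hX]
  · rfl

open LatticeTheta in
theorem divisor_proportional_has_almost_periodic_modulus_general
    {m : ℕ} (g : ℂ → ℂ) (hg : Differentiable ℂ g)
    (hzero : ∀ w : ℂ, g w = 0 ↔ ∃ p q : ℤ, w = (p : ℂ) + (q : ℂ) * Complex.I)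
    (hsimple : ∀ p q : ℤ, deriv g ((p : ℂ) + (q : ℂ) * Complex.I) ≠ 0)
    (μ : Fin m → ℝ) (t : ℝ) (l : Fin m → ℝ) (hl : l = t • μ) :
    ∃ F u : (Fin m → ℂ) → ℂ, Differentiable ℂ F ∧ Differentiable ℂ u ∧
      (∀ z, u z ≠ 0) ∧
      (∀ z, g (bil z l + Complex.I * bil z μ) = u z * F z) ∧
      APTube (fun z => ‖F z‖) Set.univ := by
  subst hl
  obtain ⟨v, hv, hv0, hgv⟩ := exists_eq_mul_of_simple_zeros hg differentiable_theta
    (fun w => by rw [hzero, theta_eq_zero_iff])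
    (fun w hw => by obtain ⟨p, q, rfl⟩ := (hzero w).mp hw; exact hsimple p q)
    (fun w hw => by
      obtain ⟨p, k, rfl⟩ := theta_eq_zero_iff.mp hw
      exact (theta_zero_and_deriv_ne_zero_at_lattice p k).2)
  let α : ℂ := t + I
  -- `Re E` is the Gaussian weight of `thetaModulus` at `α ζ`, up to a function of `Im ζ`
  let E : (Fin m → ℂ) → ℂ := fun z => π * I * α * bil z μ * (bil z μ - 1)
  refine ⟨fun z => theta (α * bil z μ) * cexp (E z), fun z => v (α * bil z μ) * cexp (-E z),
    by fun_prop, by fun_prop, fun z => mul_ne_zero (hv0 _) (Complex.exp_ne_zero _), fun z => ?_,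
    fun K hK _ => ?_⟩
  · rw [bil_smul, ← add_mul, hgv, mul_mul_mul_comm, ← Complex.exp_add, neg_add_cancel,
      Complex.exp_zero, mul_one]
  · obtain ⟨C, hC⟩ := exists_norm_comp_im_bil_le_on_tube hK
      (φ := fun r => rexp (π * (1 + t ^ 2) * r ^ 2)) (by fun_prop) μ
    refine apOn_of_eq_mul continuous_thetaModulus periodic_thetaModulus_one periodic_thetaModulus_I
      (L := fun z => α * bil z μ) (ξ := fun s => α * ((∑ j, s j * μ j : ℝ) : ℂ))
      (fun z s => by rw [bil_add_toC, mul_add])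
      (X := fun z => rexp (π * (1 + t ^ 2) * (bil z μ).im ^ 2))
      (fun z s => by simp [bil_add_toC]) hC fun z => norm_theta_mul_cexp t (bil z μ)

/-- Let `g` be entire on `ℂ` with zero set exactly `ℤ + iℤ`, all zeros
simple. If `μ ∈ ℝ^m`, `μ ≠ 0`, `t ∈ ℝ` and `λ = tμ`, then there exists an entire function
`F` on `ℂ^m` with the same divisor as `z ↦ g(⟨z,λ⟩ + i⟨z,μ⟩)` such that `|F|` is almost
periodic on every tube `T_K` with compact base `K ⊆ ℝ^m`. -/
theorem divisor_proportional_has_almost_periodic_modulus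
    {m : ℕ} (g : ℂ → ℂ) (hg : Differentiable ℂ g)
    (hzero : ∀ w : ℂ, g w = 0 ↔ ∃ p q : ℤ, w = (p : ℂ) + (q : ℂ) * Complex.I)
    (hsimple : ∀ p q : ℤ, deriv g ((p : ℂ) + (q : ℂ) * Complex.I) ≠ 0)
    (μ : Fin m → ℝ) (hμ : μ ≠ 0) (t : ℝ) (l : Fin m → ℝ) (hl : l = t • μ) :
    ∃ F u : (Fin m → ℂ) → ℂ, Differentiable ℂ F ∧ Differentiable ℂ u ∧
      (∀ z, u z ≠ 0) ∧
      (∀ z, g (bil z l + Complex.I * bil z μ) = u z * F z) ∧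
      APTube (fun z => ‖F z‖) Set.univ :=
  divisor_proportional_has_almost_periodic_modulus_general g hg hzero hsimple μ t l hl
end
end

section
/- Let m ≥ 2, let G be an abelian group, and let W : ℝ^m × ℝ^m → G be additive in each variable (W(λ+λ',μ) = W(λ,μ) + W(λ',μ) and W(λ,μ+μ') = W(λ,μ) + W(λ,μ')) and skew-symmetric (W(λ,μ) = −W(μ,λ)). Let e¹, e² be the first two standard basis vectors of ℝ^m. If α_1,…,α_n, β_1,…,β_n ∈ ℝ satisfy Σ_{j=1}^n α_j β_j = 0, then there exist N ∈ ℕ, γ_1,…,γ_N ∈ ℝ and ν^1,…,ν^N ∈ ℝ^m such that Σ_{j=1}^n W(α_j e¹, β_j e²) = Σ_{k=1}^N W(γ_k ν^k, ν^k). -/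
/-- Let `m ≥ 2`, `G` an abelian group, and `W : ℝ^m × ℝ^m → G` additive
in each variable and skew-symmetric. If `α_1, …, α_n, β_1, …, β_n ∈ ℝ` satisfy
`∑ α_j β_j = 0`, then `∑_j W(α_j e¹, β_j e²) = ∑_k W(γ_k ν^k, ν^k)` for some
`γ_1, …, γ_N ∈ ℝ` and `ν^1, …, ν^N ∈ ℝ^m`. -/
theorem sum_W_eq_sum_W_proportional {m : ℕ} (hm : 2 ≤ m) {G : Type*} [AddCommGroup G]
    (W : (Fin m → ℝ) → (Fin m → ℝ) → G)
    (hadd₁ : ∀ a a' b, W (a + a') b = W a b + W a' b)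
    (hadd₂ : ∀ a b b', W a (b + b') = W a b + W a b')
    (hskew : ∀ a b, W a b = -W b a)
    (n : ℕ) (α β : Fin n → ℝ) (hab : ∑ j, α j * β j = 0) :
    ∃ (N : ℕ) (γ : Fin N → ℝ) (ν : Fin N → Fin m → ℝ),
      ∑ j, W (α j • (Pi.single (⟨0, by omega⟩ : Fin m) (1 : ℝ) : Fin m → ℝ))
            (β j • (Pi.single (⟨1, by omega⟩ : Fin m) (1 : ℝ) : Fin m → ℝ)) =
        ∑ k, W (γ k • ν k) (ν k) := by
  set e1 : Fin m → ℝ := Pi.single (⟨0, by omega⟩ : Fin m) (1 : ℝ) with he1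
  set e2 : Fin m → ℝ := Pi.single (⟨1, by omega⟩ : Fin m) (1 : ℝ) with he2
  have hW0 : ∀ b, W 0 b = 0 := by
    intro b
    have h := hadd₁ 0 0 b
    simp only [add_zero] at h
    exact (left_eq_add.mp h)
  have hWneg : ∀ a b, W (-a) b = -W a b := by
    intro a b
    have h := hadd₁ a (-a) b
    simp only [add_neg_cancel, hW0] at h
    exact (eq_neg_of_add_eq_zero_right h.symm)
  -- the key pointwise identity
  have key : ∀ a b : ℝ, W (a • e1) (b • e2) =
      W ((a * b) • e1) e2 +
        (W ((-b) • (a • e1 + e2)) (a • e1 + e2) +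
          (W (b • (a • e1)) (a • e1) + W (b • e2) e2)) := by
    intro a b
    rw [neg_smul, hWneg, smul_add, hadd₁, hadd₂, hadd₂, hskew (b • e2) (a • e1),
      smul_smul, mul_comm b a]
    abel
  -- additivity in the first variable as an AddMonoidHom
  let φ : (Fin m → ℝ) →+ G := AddMonoidHom.mk' (fun a => W a e2) (fun a a' => hadd₁ a a' e2)
  have hsum0 : ∑ j, W ((α j * β j) • e1) e2 = 0 := by
    have : ∑ j, W ((α j * β j) • e1) e2 = φ (∑ j, (α j * β j) • e1) := (map_sum φ _ _).symm
    rw [this, ← Finset.sum_smul, hab, zero_smul]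
    exact hW0 e2
  -- the data
  refine ⟨n * 3, ?_, ?_, ?_⟩
  · exact fun k => (fun p : Fin n × Fin 3 =>
      match p.2 with
      | 0 => -(β p.1)
      | 1 => β p.1
      | 2 => β p.1) (finProdFinEquiv.symm k)
  · exact fun k => (fun p : Fin n × Fin 3 =>
      match p.2 with
      | 0 => α p.1 • e1 + e2
      | 1 => α p.1 • e1
      | 2 => e2) (finProdFinEquiv.symm k)
  · rw [← Equiv.sum_comp (finProdFinEquiv : Fin n × Fin 3 ≃ Fin (n * 3))]
    simp only [Equiv.symm_apply_apply]
    rw [Fintype.sum_prod_type]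
    simp only [Fin.sum_univ_three]
    calc ∑ j, W (α j • e1) (β j • e2)
        = ∑ j, (W ((α j * β j) • e1) e2 +
            (W ((-β j) • (α j • e1 + e2)) (α j • e1 + e2) +
              (W (β j • (α j • e1)) (α j • e1) + W (β j • e2) e2))) := by
          exact Finset.sum_congr rfl fun j _ => key (α j) (β j)
      _ = (∑ j, W ((α j * β j) • e1) e2) +
            ∑ j, (W ((-β j) • (α j • e1 + e2)) (α j • e1 + e2) +
              (W (β j • (α j • e1)) (α j • e1) + W (β j • e2) e2)) := by
          rw [Finset.sum_add_distrib]
      _ = ∑ j, (W ((-β j) • (α j • e1 + e2)) (α j • e1 + e2) +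
            (W (β j • (α j • e1)) (α j • e1) + W (β j • e2) e2)) := by
          rw [hsum0, zero_add]
      _ = _ := by exact Finset.sum_congr rfl fun j _ => by abel
end

section
/- Let m ≥ 1, let G be an abelian group, and let W : ℝ^m × ℝ^m → G be additive in each variable (W(λ+λ',μ) = W(λ,μ) + W(λ',μ) and W(λ,μ+μ') = W(λ,μ) + W(λ,μ')) and skew-symmetric (W(λ,μ) = −W(μ,λ)). Let λ^1,…,λ^n, μ^1,…,μ^n ∈ ℝ^m be such that the m×m matrix Σ_{j=1}^n (λ^j_p μ^j_q)_{p,q} is symmetric. Then there exist N ∈ ℕ, γ_1,…,γ_N ∈ ℝ and ν^1,…,ν^N ∈ ℝ^m such that Σ_{j=1}^n W(λ^j, μ^j) = Σ_{k=1}^N W(γ_k ν^k, ν^k). -/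
/-!
Let `H` be the subgroup generated by the elements `W (γ • ν) ν`. It is closed under negation
(`-W (γ • ν) ν = W ((-γ) • ν) ν`), so its elements are exactly the finite sums
`∑ k, W (γ k • ν k) (ν k)`. Modulo `H`, `W` vanishes on every pair `(γ • ν, ν)`; this forces it to
be skew and `ℝ`-balanced, `W (r • a) b = W a (r • b)`. Expanding in the standard basis then gives
`∑ j, W (L j) (M j) ≡ ∑ p, ∑ q, W (c p q • e p) (e q)` with `c = ∑ j, (L j, M j)` symmetric, and the
terms `(p, q)` and `(q, p)` cancel.
-/

theorem Finset.sum_sum_eq_zero_of_alternating {ι G : Type*} [Fintype ι] [AddCommGroup G]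
    (X : ι → ι → G) (hskew : ∀ p q, X q p = -X p q) (hdiag : ∀ p, X p p = 0) :
    ∑ p, ∑ q, X p q = 0 := by
  rw [← Finset.sum_product']
  refine Finset.sum_involution (fun x _ => x.swap) (fun x _ => ?_) (fun x _ hx hswap => ?_)
    (fun _ _ => Finset.mem_univ _) (fun _ _ => rfl)
  · simp [hskew x.1 x.2]
  · obtain ⟨p, q⟩ := x
    obtain rfl : q = p := congrArg Prod.fst hswap
    exact hx (hdiag q)

theorem AddSubgroup.exists_eq_fin_sum_of_mem_closure_range {ι M : Type*} [AddCommGroup M]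
    {f : ι → M} (hneg : ∀ i, ∃ j, f j = -f i) {x : M} (hx : x ∈ AddSubgroup.closure (Set.range f)) :
    ∃ (N : ℕ) (g : Fin N → ι), x = ∑ k, f (g k) := by
  induction hx using AddSubgroup.closure_induction with
  | mem _ hy =>
    obtain ⟨i, rfl⟩ := hy
    exact ⟨1, fun _ => i, by simp⟩
  | zero => exact ⟨0, Fin.elim0, by simp⟩
  | add _ _ _ _ hy hz =>
    obtain ⟨N₁, g₁, rfl⟩ := hy
    obtain ⟨N₂, g₂, rfl⟩ := hz
    exact ⟨N₁ + N₂, Fin.append g₁ g₂, by simp [Fin.sum_univ_add]⟩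
  | neg _ _ hy =>
    obtain ⟨N, g, rfl⟩ := hy
    choose j hj using hneg
    exact ⟨N, j ∘ g, by simp [hj]⟩

namespace AddMonoidHom

section Biadditive

variable {V G : Type*} [AddCommGroup V] [AddCommGroup G]

theorem apply_swap_eq_neg_of_apply_self (B : V →+ V →+ G) (hB : ∀ v, B v v = 0) (a b : V) :
    B b a = -B a b := by
  have h := hB (a + b)
  simp only [map_add, add_apply, hB, zero_add, add_zero] at h
  exact eq_neg_of_add_eq_zero_left h

variable {K : Type*} [DivisionRing K] [Module K V]

theorem apply_smul_eq_apply_smul (B : V →+ V →+ G) (hB : ∀ (c : K) v, B (c • v) v = 0)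
    (r : K) (a b : V) : B (r • a) b = B a (r • b) := by
  rcases eq_or_ne r 0 with rfl | hr
  · simp
  have hskew := apply_swap_eq_neg_of_apply_self B (fun v => by simpa using hB 1 v)
  have key : ∀ b, B (r • a) (r⁻¹ • b) = B a b := fun b => by
    have h := hB r (a + r⁻¹ • b)
    have hb : B b (r⁻¹ • b) = 0 := by simpa [smul_smul, mul_inv_cancel₀ hr] using hB r (r⁻¹ • b)
    rw [smul_add, smul_smul, mul_inv_cancel₀ hr, one_smul] at h
    simp only [map_add, add_apply, hB, hb, zero_add, add_zero] at h
    rw [hskew a b, neg_add_eq_zero] at h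
    exact h.symm
  simpa [smul_smul, inv_mul_cancel₀ hr] using key (r • b)

end Biadditive

section Coordinates

variable {ι K G : Type*} [Fintype ι] [DecidableEq ι] [Field K] [AddCommGroup G]
  (B : (ι → K) →+ (ι → K) →+ G)

theorem apply_eq_sum_sum_single (hB : ∀ (c : K) v, B (c • v) v = 0) (a b : ι → K) :
    B a b = ∑ p, ∑ q, B ((a p * b q) • Pi.single p 1) (Pi.single q 1) := by
  conv_lhs => rw [pi_eq_sum_univ' a, pi_eq_sum_univ' b]
  simp only [map_sum, finsetSum_apply]
  rw [Finset.sum_comm]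
  refine Finset.sum_congr rfl fun p _ => Finset.sum_congr rfl fun q _ => ?_
  rw [← apply_smul_eq_apply_smul B hB, smul_smul, mul_comm]

theorem sum_apply_eq_zero_of_symm (hB : ∀ (c : K) v, B (c • v) v = 0) {σ : Type*} [Fintype σ]
    (L M : σ → ι → K)
    (hsymm : ∀ p q, ∑ j, L j p * M j q = ∑ j, L j q * M j p) :
    ∑ j, B (L j) (M j) = 0 := by
  have hskew := apply_swap_eq_neg_of_apply_self B (fun v => by simpa using hB 1 v)
  calc ∑ j, B (L j) (M j)
      = ∑ p, ∑ q, B ((∑ j, L j p * M j q) • Pi.single p 1) (Pi.single q 1) := by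
        rw [Finset.sum_congr rfl fun j _ => apply_eq_sum_sum_single B hB (L j) (M j)]
        simp only [Finset.sum_smul, map_sum, finsetSum_apply]
        rw [Finset.sum_comm]
        exact Finset.sum_congr rfl fun p _ => Finset.sum_comm
    _ = 0 := by
      refine Finset.sum_sum_eq_zero_of_alternating _ (fun p q => ?_) (fun p => hB _ _)
      rw [← hsymm p q, apply_smul_eq_apply_smul B hB, hskew]

theorem sum_apply_mem_of_symm {σ : Type*} [Fintype σ] (H : AddSubgroup G)
    (hH : ∀ (c : K) v, B (c • v) v ∈ H) (L M : σ → ι → K)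
    (hsymm : ∀ p q, ∑ j, L j p * M j q = ∑ j, L j q * M j p) :
    ∑ j, B (L j) (M j) ∈ H := by
  rw [← QuotientAddGroup.eq_zero_iff, ← QuotientAddGroup.mk'_apply, map_sum]
  exact sum_apply_eq_zero_of_symm (B.compr₂ (QuotientAddGroup.mk' H))
    (fun c v => (QuotientAddGroup.eq_zero_iff _).2 (hH c v)) L M hsymm

end Coordinates

end AddMonoidHom

theorem sum_W_eq_sum_W_proportional_of_symm_general {m : ℕ}
    {G : Type*} [AddCommGroup G]
    (W : (Fin m → ℝ) → (Fin m → ℝ) → G)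
    (hadd₁ : ∀ a a' b, W (a + a') b = W a b + W a' b)
    (hadd₂ : ∀ a b b', W a (b + b') = W a b + W a b')
    (n : ℕ) (L M : Fin n → Fin m → ℝ)
    (hsymm : ∀ p q : Fin m, ∑ j, L j p * M j q = ∑ j, L j q * M j p) :
    ∃ (N : ℕ) (γ : Fin N → ℝ) (ν : Fin N → Fin m → ℝ),
      ∑ j, W (L j) (M j) = ∑ k, W (γ k • ν k) (ν k) := by
  let B : (Fin m → ℝ) →+ (Fin m → ℝ) →+ G :=
    .mk' (fun a => .mk' (W a) (hadd₂ a)) fun a a' => AddMonoidHom.ext (hadd₁ a a')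
  let f : ℝ × (Fin m → ℝ) → G := fun x => B (x.1 • x.2) x.2
  have hneg : ∀ x, ∃ y, f y = -f x := fun x => ⟨(-x.1, x.2), by simp [f, neg_smul]⟩
  have hmem := B.sum_apply_mem_of_symm (.closure (Set.range f))
    (fun c v => AddSubgroup.subset_closure ⟨(c, v), rfl⟩) L M hsymm
  obtain ⟨N, g, hg⟩ := AddSubgroup.exists_eq_fin_sum_of_mem_closure_range hneg hmem
  exact ⟨N, fun k => (g k).1, fun k => (g k).2, hg⟩

/-- Let `m ≥ 1`, `G` an abelian group, and `W : ℝ^m × ℝ^m → G` additive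
in each variable and skew-symmetric. If `λ^1, …, λ^n, μ^1, …, μ^n ∈ ℝ^m` are such that
the matrix `∑_j (λ^j_p μ^j_q)_{p,q}` is symmetric, then
`∑_j W(λ^j, μ^j) = ∑_k W(γ_k ν^k, ν^k)` for some `γ_1, …, γ_N ∈ ℝ` and
`ν^1, …, ν^N ∈ ℝ^m`. -/
theorem sum_W_eq_sum_W_proportional_of_symm {m : ℕ} (hm : 1 ≤ m)
    {G : Type*} [AddCommGroup G]
    (W : (Fin m → ℝ) → (Fin m → ℝ) → G)
    (hadd₁ : ∀ a a' b, W (a + a') b = W a b + W a' b)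
    (hadd₂ : ∀ a b b', W a (b + b') = W a b + W a b')
    (hskew : ∀ a b, W a b = -W b a)
    (n : ℕ) (L M : Fin n → Fin m → ℝ)
    (hsymm : ∀ p q : Fin m, ∑ j, L j p * M j q = ∑ j, L j q * M j p) :
    ∃ (N : ℕ) (γ : Fin N → ℝ) (ν : Fin N → Fin m → ℝ),
      ∑ j, W (L j) (M j) = ∑ k, W (γ k • ν k) (ν k) :=
  sum_W_eq_sum_W_proportional_of_symm_general W hadd₁ hadd₂ n L M hsymm
end
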